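/- The variety X(k,n) of tuples (V_1,...,V_n) of k-dimensional subspaces of ℂ^n with pr_i(V_i) ⊆ V_{i+1} (indices mod n, pr_i the coordinate projection killing e_i) is isomorphic to the variety of tuples (V'_1,...,V'_n) of k-dimensional subspaces of ℂ^n with s_1(V'_i) ⊆ V'_{i+1}, where s_1 is the nilpotent shift sending v_j to v_{j+1} for j < n and v_n to 0. -/
import Mathlib


/-- The matrix of the coordinate projection `pr_i : ℂ^n → ℂ^n` killing `e_i`. -/
noncomputable def prMatrix (n : ℕ) (i : ZMod n) : Matrix (ZMod n) (ZMod n) ℂ :=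
  Matrix.diagonal fun j => if j = i then 0 else 1

/-- The nilpotent shift `s₁ : ℂ^n → ℂ^n` sending `v_j ↦ v_{j+1}` for `j < n` and
`v_n ↦ 0`, with coordinates indexed by `Fin n ≃ ZMod n` via `ZMod.val`. -/
noncomputable def shiftMatrix (n : ℕ) : Matrix (ZMod n) (ZMod n) ℂ :=
  Matrix.of fun r c => if r.val = c.val + 1 then 1 else 0

lemma val_succ_iff (n : ℕ) [NeZero n] (r c : ZMod n) :
    r.val = c.val + 1 ↔ (r ≠ 0 ∧ c = r - 1) := by
  constructor
  · intro h
    have hr : r ≠ 0 := by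
      intro h0; rw [h0, ZMod.val_zero] at h; omega
    have : r = c + 1 := by
      have : ((r.val : ℕ) : ZMod n) = ((c.val + 1 : ℕ) : ZMod n) := by rw [h]
      simpa using this
    exact ⟨hr, by rw [this]; ring⟩
  · rintro ⟨hr, rfl⟩
    have hc : r - 1 + 1 = r := by ring
    have hlt : (r - 1).val + 1 < n := by
      have := ZMod.val_lt (r - 1)
      rcases lt_or_eq_of_le (Nat.succ_le_of_lt this) with h | h
      · exact h
      · exfalso
        apply hr
        have : ((r - 1).val + 1 : ℕ) = (n : ℕ) := h
        calc r = (r - 1) + 1 := hc.symm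
          _ = (((r-1).val : ℕ) : ZMod n) + 1 := by simp
          _ = (((r-1).val + 1 : ℕ) : ZMod n) := by push_cast; ring
          _ = ((n : ℕ) : ZMod n) := by rw [this]
          _ = 0 := by simp
    calc r.val = ((r - 1) + 1).val := by rw [hc]
      _ = ((((r-1).val + 1 : ℕ)) : ZMod n).val := by push_cast; simp
      _ = (r - 1).val + 1 := ZMod.val_cast_of_lt hlt

lemma shift_apply (n : ℕ) [NeZero n] (v : ZMod n → ℂ) (r : ZMod n) :
    Matrix.toLin' (shiftMatrix n) v r = if r = 0 then 0 else v (r - 1) := by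
  have : Matrix.toLin' (shiftMatrix n) v r = ∑ c, (if r.val = c.val + 1 then (1:ℂ) else 0) * v c := by
    simp [Matrix.toLin'_apply, Matrix.mulVec, dotProduct, shiftMatrix]
  rw [this]
  by_cases hr : r = 0
  · simp only [hr]
    rw [Finset.sum_eq_zero]
    · simp
    intro c _
    simp [val_succ_iff]
  · simp only [hr, if_false]
    rw [show (∑ c, (if r.val = c.val + 1 then (1:ℂ) else 0) * v c)
        = ∑ c, (if c = r - 1 then (1:ℂ) else 0) * v c from
      Finset.sum_congr rfl fun c _ => by simp [val_succ_iff, hr]]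
    simp [ite_mul, Finset.sum_ite_eq']

lemma pr_apply (n : ℕ) [NeZero n] (i : ZMod n) (v : ZMod n → ℂ) (r : ZMod n) :
    Matrix.toLin' (prMatrix n i) v r = if r = i then 0 else v r := by
  simp [Matrix.toLin'_apply, prMatrix, Matrix.mulVec_diagonal, ite_mul]

lemma key_intertwine (n : ℕ) [NeZero n] (i : ZMod n) :
    Matrix.toLin' (shiftMatrix n) ∘ₗ
      (LinearEquiv.funCongrLeft ℂ ℂ (Equiv.subLeft (i - 1) : Equiv.Perm (ZMod n))).toLinearMap
    = (LinearEquiv.funCongrLeft ℂ ℂ (Equiv.subLeft (i + 1 - 1) : Equiv.Perm (ZMod n))).toLinearMap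
        ∘ₗ Matrix.toLin' (prMatrix n i) := by
  apply LinearMap.ext; intro v; funext r
  simp only [LinearMap.comp_apply]
  have h1 : (LinearEquiv.funCongrLeft ℂ ℂ (Equiv.subLeft (i - 1) : Equiv.Perm (ZMod n))).toLinearMap v
      = fun x => v (i - 1 - x) := by
    funext x; simp [LinearEquiv.funCongrLeft]
  have h2 : (LinearEquiv.funCongrLeft ℂ ℂ (Equiv.subLeft (i + 1 - 1) : Equiv.Perm (ZMod n))).toLinearMap
      (Matrix.toLin' (prMatrix n i) v) r = Matrix.toLin' (prMatrix n i) v (i + 1 - 1 - r) := by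
    simp [LinearEquiv.funCongrLeft]
  rw [h1, h2, shift_apply, pr_apply]
  have e1 : i + 1 - 1 - r = i - r := by ring
  rw [e1]
  by_cases hr : r = 0
  · simp [hr]
  · have : ¬ (i - r = i) := by
      intro h; apply hr; have := sub_eq_self.mp h; exact this
    simp only [hr, if_false, this]
    congr 1
    ring

lemma key_intertwine' (n : ℕ) [NeZero n] (i : ZMod n) :
    Matrix.toLin' (prMatrix n i) ∘ₗ
      (LinearEquiv.funCongrLeft ℂ ℂ (Equiv.subLeft (i - 1) : Equiv.Perm (ZMod n))).symm.toLinearMap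
    = (LinearEquiv.funCongrLeft ℂ ℂ (Equiv.subLeft (i + 1 - 1) : Equiv.Perm (ZMod n))).symm.toLinearMap
        ∘ₗ Matrix.toLin' (shiftMatrix n) := by
  apply LinearMap.ext; intro w
  have h := congrArg (LinearEquiv.funCongrLeft ℂ ℂ (Equiv.subLeft (i + 1 - 1) : Equiv.Perm (ZMod n))).symm
    (LinearMap.congr_fun (key_intertwine n i)
      ((LinearEquiv.funCongrLeft ℂ ℂ (Equiv.subLeft (i - 1) : Equiv.Perm (ZMod n))).symm w))
  simp only [LinearMap.comp_apply, LinearEquiv.coe_coe, LinearEquiv.apply_symm_apply,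
    LinearEquiv.symm_apply_apply] at h
  simpa using h.symm

/-- The variety `X(k,n)` of tuples `(V_i)` of `k`-dimensional subspaces of `ℂ^n` with
`pr_i V_i ⊆ V_{i+1}` is isomorphic to the corresponding variety defined with the
nilpotent shift `s₁` in place of the projections `pr_i`; the isomorphism is induced by
vertex-dependent permutations of the basis vectors. -/
theorem Xkn_pr_iso_shift (n k : ℕ) [NeZero n] (hk : k ≤ n) :
    ∃ σ : ZMod n → Equiv.Perm (ZMod n),
      Set.BijOn
        (fun (V : ZMod n → Submodule ℂ (ZMod n → ℂ)) => fun i =>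
          Submodule.map (LinearEquiv.funCongrLeft ℂ ℂ (σ i)).toLinearMap (V i))
        {V | (∀ i, Module.finrank ℂ (V i) = k) ∧
          ∀ i, Submodule.map (Matrix.toLin' (prMatrix n i)) (V i) ≤ V (i + 1)}
        {V | (∀ i, Module.finrank ℂ (V i) = k) ∧
          ∀ i, Submodule.map (Matrix.toLin' (shiftMatrix n)) (V i) ≤ V (i + 1)} := by
  refine ⟨fun i => (Equiv.subLeft (i - 1) : Equiv.Perm (ZMod n)), ?_, ?_, ?_⟩
  · rintro V ⟨hrk, hle⟩
    refine ⟨fun i => ?_, fun i => ?_⟩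
    · rw [LinearEquiv.finrank_map_eq]; exact hrk i
    · calc Submodule.map (Matrix.toLin' (shiftMatrix n))
            (Submodule.map (LinearEquiv.funCongrLeft ℂ ℂ (Equiv.subLeft (i - 1) : Equiv.Perm (ZMod n))).toLinearMap (V i))
          = Submodule.map (Matrix.toLin' (shiftMatrix n) ∘ₗ
              (LinearEquiv.funCongrLeft ℂ ℂ (Equiv.subLeft (i - 1) : Equiv.Perm (ZMod n))).toLinearMap) (V i) := by
            rw [Submodule.map_comp]
        _ = Submodule.map ((LinearEquiv.funCongrLeft ℂ ℂ (Equiv.subLeft (i + 1 - 1) : Equiv.Perm (ZMod n))).toLinearMap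
              ∘ₗ Matrix.toLin' (prMatrix n i)) (V i) := by rw [key_intertwine]
        _ = Submodule.map (LinearEquiv.funCongrLeft ℂ ℂ (Equiv.subLeft (i + 1 - 1) : Equiv.Perm (ZMod n))).toLinearMap
              (Submodule.map (Matrix.toLin' (prMatrix n i)) (V i)) := by rw [Submodule.map_comp]
        _ ≤ Submodule.map (LinearEquiv.funCongrLeft ℂ ℂ (Equiv.subLeft (i + 1 - 1) : Equiv.Perm (ZMod n))).toLinearMap
              (V (i + 1)) := Submodule.map_mono (hle i)
  · intro V _ W _ h
    funext i
    have hi := congrFun h i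
    exact Submodule.map_injective_of_injective
      (LinearEquiv.funCongrLeft ℂ ℂ (Equiv.subLeft (i - 1) : Equiv.Perm (ZMod n))).injective hi
  · rintro W ⟨hrk, hle⟩
    refine ⟨fun i => Submodule.map
      (LinearEquiv.funCongrLeft ℂ ℂ (Equiv.subLeft (i - 1) : Equiv.Perm (ZMod n))).symm.toLinearMap (W i),
      ⟨fun i => ?_, fun i => ?_⟩, ?_⟩
    · rw [LinearEquiv.finrank_map_eq]; exact hrk i
    · calc Submodule.map (Matrix.toLin' (prMatrix n i))
            (Submodule.map (LinearEquiv.funCongrLeft ℂ ℂ (Equiv.subLeft (i - 1) : Equiv.Perm (ZMod n))).symm.toLinearMap (W i))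
          = Submodule.map (Matrix.toLin' (prMatrix n i) ∘ₗ
              (LinearEquiv.funCongrLeft ℂ ℂ (Equiv.subLeft (i - 1) : Equiv.Perm (ZMod n))).symm.toLinearMap) (W i) := by
            rw [Submodule.map_comp]
        _ = Submodule.map ((LinearEquiv.funCongrLeft ℂ ℂ (Equiv.subLeft (i + 1 - 1) : Equiv.Perm (ZMod n))).symm.toLinearMap
              ∘ₗ Matrix.toLin' (shiftMatrix n)) (W i) := by rw [key_intertwine']
        _ = Submodule.map (LinearEquiv.funCongrLeft ℂ ℂ (Equiv.subLeft (i + 1 - 1) : Equiv.Perm (ZMod n))).symm.toLinearMap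
              (Submodule.map (Matrix.toLin' (shiftMatrix n)) (W i)) := by rw [Submodule.map_comp]
        _ ≤ Submodule.map (LinearEquiv.funCongrLeft ℂ ℂ (Equiv.subLeft (i + 1 - 1) : Equiv.Perm (ZMod n))).symm.toLinearMap
              (W (i + 1)) := Submodule.map_mono (hle i)
    · funext i
      show Submodule.map _ (Submodule.map _ (W i)) = W i
      rw [← Submodule.map_comp]
      have : (LinearEquiv.funCongrLeft ℂ ℂ (Equiv.subLeft (i - 1) : Equiv.Perm (ZMod n))).toLinearMap ∘ₗ
          (LinearEquiv.funCongrLeft ℂ ℂ (Equiv.subLeft (i - 1) : Equiv.Perm (ZMod n))).symm.toLinearMap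
          = LinearMap.id := by
        apply LinearMap.ext; intro w
        exact (LinearEquiv.funCongrLeft ℂ ℂ (Equiv.subLeft (i - 1) : Equiv.Perm (ZMod n))).apply_symm_apply w
      rw [this, Submodule.map_id]
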